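/- Let α > 0 and ρ(x) = e^{−α|x|²} for x ∈ ℝ³. Then for all x ∈ ℝ³: 8ρ(x) + 7 x·∇ρ(x) + x·(D²ρ(x) x) = 4 e^{−α|x|²} (α²|x|⁴ − 4α|x|² + 2). In particular, this quantity is negative exactly when √((2−√2)/α) < |x| < √((2+√2)/α), so the positivity condition 8ρ + 7 x·∇ρ + x·(D²ρ x) > 0 on ℝ³ fails for every α > 0. -/

import Mathlib

open Real

noncomputable section

/-- Euclidean space `ℝ³`. -/
abbrev E3 := EuclideanSpace ℝ (Fin 3)

/-- The Gaussian doping profile `ρ(x) = e^{−α|x|²}`. -/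
def gauss (α : ℝ) (x : E3) : ℝ := Real.exp (-α * ‖x‖ ^ 2)

/-- The expression `8ρ(x) + 7 x·∇ρ(x) + x·(D²ρ(x)x)` for a function `ρ`,
where `x·∇ρ(x)` is the Fréchet derivative of `ρ` applied to `x` and
`x·(D²ρ(x)x)` is the Hessian quadratic form at `x` evaluated at `x`. -/
def posExpr (ρ : E3 → ℝ) (x : E3) : ℝ :=
  8 * ρ x + 7 * fderiv ℝ ρ x x + fderiv ℝ (fderiv ℝ ρ) x x x

/-!
For the radial profile `ρ(x) = e^{−α|x|²}` one has `x·∇ρ = −2α|x|²ρ` and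
`x·(D²ρ x) = (4α²|x|⁴ − 2α|x|²)ρ`, so `8ρ + 7x·∇ρ + x·(D²ρ x) = 4ρ (α²|x|⁴ − 4α|x|² + 2)`.
The last factor is a quadratic in `α|x|²` with roots `2 ± √2`, hence negative exactly on the
open shell between the two corresponding radii, which is nonempty: it contains the sphere `α|x|² = 2`.
-/

section InnerProductSpace

variable {E : Type*} [NormedAddCommGroup E] [InnerProductSpace ℝ E]

lemma hasFDerivAt_exp_neg_mul_norm_sq (α : ℝ) (x : E) :
    HasFDerivAt (fun y : E => exp (-α * ‖y‖ ^ 2))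
      ((-2 * α * exp (-α * ‖x‖ ^ 2)) • innerSL ℝ x) x := by
  have h := (hasStrictFDerivAt_norm_sq x).hasFDerivAt.const_smul (-α)
  refine ((hasDerivAt_exp _).comp_hasFDerivAt x h).congr_fderiv ?_
  ext v
  simp only [smul_apply, Pi.smul_apply, smul_eq_mul, nsmul_eq_mul]
  ring

lemma fderiv_exp_neg_mul_norm_sq (α : ℝ) :
    fderiv ℝ (fun y : E => exp (-α * ‖y‖ ^ 2))
      = fun x => (-2 * α * exp (-α * ‖x‖ ^ 2)) • innerSL ℝ x :=
  funext fun x => (hasFDerivAt_exp_neg_mul_norm_sq α x).fderiv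

lemma fderiv_fderiv_exp_neg_mul_norm_sq_apply (α : ℝ) (x v w : E) :
    fderiv ℝ (fderiv ℝ (fun y : E => exp (-α * ‖y‖ ^ 2))) x v w
      = (4 * α ^ 2 * inner ℝ x v * inner ℝ x w - 2 * α * inner ℝ v w) * exp (-α * ‖x‖ ^ 2) := by
  have hc : HasFDerivAt (fun y : E => -2 * α * exp (-α * ‖y‖ ^ 2)) _ x :=
    (hasFDerivAt_exp_neg_mul_norm_sq α x).const_mul (-2 * α)
  rw [fderiv_exp_neg_mul_norm_sq, fderiv_fun_smul hc.differentiableAt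
    (innerSL ℝ).differentiableAt, hc.fderiv]
  simp only [add_apply, smul_apply, ContinuousLinearMap.smulRight_apply, smul_eq_mul,
    ContinuousLinearMap.fderiv, innerSL_apply_apply]
  -- one `innerSL ℝ x w` survives with a different (defeq) instance path, so atoms are compared
  -- up to default transparency
  ring!

end InnerProductSpace

lemma posExpr_gauss (α : ℝ) (x : E3) :
    posExpr (gauss α) x
      = 4 * exp (-α * ‖x‖ ^ 2) * (α ^ 2 * ‖x‖ ^ 4 - 4 * α * ‖x‖ ^ 2 + 2) := by
  unfold posExpr gauss
  rw [fderiv_fderiv_exp_neg_mul_norm_sq_apply, fderiv_exp_neg_mul_norm_sq]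
  simp only [smul_apply, innerSL_apply_apply, real_inner_self_eq_norm_sq, smul_eq_mul]
  ring

lemma quadratic_neg_iff {α t : ℝ} :
    α ^ 2 * t ^ 2 - 4 * α * t + 2 < 0 ↔ 2 - √2 < α * t ∧ α * t < 2 + √2 := by
  have hsq : √2 ^ 2 = 2 := sq_sqrt zero_le_two
  have hfactor : α ^ 2 * t ^ 2 - 4 * α * t + 2 = (α * t - (2 - √2)) * (α * t - (2 + √2)) := by
    linear_combination hsq
  rw [hfactor, mul_neg_iff, sub_pos, sub_neg, sub_neg, sub_pos]
  have hroots : 2 - √2 < 2 + √2 := by linarith [sqrt_pos.mpr two_pos]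
  exact or_iff_left fun ⟨h₁, h₂⟩ => hroots.not_gt (h₂.trans h₁)

lemma sqrt_two_lt_two : √2 < 2 :=
  (sqrt_lt' two_pos).mpr (by norm_num)

lemma quartic_neg_iff {α r : ℝ} (hα : 0 < α) (hr : 0 ≤ r) :
    α ^ 2 * r ^ 4 - 4 * α * r ^ 2 + 2 < 0 ↔ √((2 - √2) / α) < r ∧ r < √((2 + √2) / α) := by
  have hlow : 0 ≤ (2 - √2) / α := div_nonneg (sub_nonneg.mpr sqrt_two_lt_two.le) hα.le
  rw [show r ^ 4 = (r ^ 2) ^ 2 by ring, quadratic_neg_iff, sqrt_lt hlow hr, lt_sqrt hr,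
    div_lt_iff₀ hα, lt_div_iff₀ hα, mul_comm α]

/-- For the Gaussian `ρ(x) = e^{−α|x|²}` (`α > 0`):
`8ρ + 7x·∇ρ + x·(D²ρx) = 4e^{−α|x|²}(α²|x|⁴ − 4α|x|² + 2)`; this quantity is
negative exactly when `√((2−√2)/α) < |x| < √((2+√2)/α)`, so the positivity
condition `8ρ + 7x·∇ρ + x·(D²ρx) > 0` on `ℝ³` fails for every `α > 0`. -/
theorem gauss_posExpr (α : ℝ) (hα : 0 < α) :
    (∀ x : E3, posExpr (gauss α) x
        = 4 * Real.exp (-α * ‖x‖ ^ 2) * (α^2 * ‖x‖ ^ 4 - 4*α*‖x‖ ^ 2 + 2)) ∧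
    (∀ x : E3, (posExpr (gauss α) x < 0 ↔
        Real.sqrt ((2 - Real.sqrt 2)/α) < ‖x‖ ∧
          ‖x‖ < Real.sqrt ((2 + Real.sqrt 2)/α))) ∧
    ¬ (∀ x : E3, 0 < posExpr (gauss α) x) := by
  have hneg (x : E3) : posExpr (gauss α) x < 0 ↔
      √((2 - √2) / α) < ‖x‖ ∧ ‖x‖ < √((2 + √2) / α) := by
    rw [posExpr_gauss, ← smul_eq_mul, smul_neg_iff_of_pos_left (by positivity),
      quartic_neg_iff hα (norm_nonneg x)]
  refine ⟨posExpr_gauss α, hneg, fun hpos => ?_⟩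
  obtain ⟨x, hx⟩ := exists_norm_eq E3 (sqrt_nonneg (2 / α))
  have hlow : √((2 - √2) / α) < ‖x‖ := by
    rw [hx]
    exact sqrt_lt_sqrt (div_nonneg (by linarith [sqrt_two_lt_two]) hα.le)
      (div_lt_div_of_pos_right (by linarith [one_lt_sqrt_two]) hα)
  have hhigh : ‖x‖ < √((2 + √2) / α) := by
    rw [hx]
    exact sqrt_lt_sqrt (by positivity) (div_lt_div_of_pos_right (by linarith [one_lt_sqrt_two]) hα)
  exact (hpos x).not_gt ((hneg x).mpr ⟨hlow, hhigh⟩)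

end
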